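/- arXiv:1712.06466 — 3 statements merged into one kernel-verified Lean document; each statement's English description precedes it below -/
import Mathlib

section
/- Let t'_{α'} < t'_{α'+1} < … < t'_{ω'} be real numbers (floating-leg payment dates), δ'_ι > 0 (ι = α',…,ω'−1) be year fractions, B_ι > 0 (ι = α',…,ω') be discount factors with B_{α'} = 1, and L_ι be real numbers (forward Libor rates) such that the pseudo-discounts B̂_ι := 1/(1 + δ'_ι L_ι) are positive. Define the spreads β_ι := (B_{ι+1}/B_ι)/B̂_ι for ι = α',…,ω'−1. Then the floating-leg value satisfies Σ_{ι=α'}^{ω'−1} B_{ι+1} · δ'_ι · L_ι = 1 − B_{ω'} + Σ_{ι=α'}^{ω'−1} B_ι (β_ι − 1). -/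
/-! Since `1 / (1 / d) = d`, the spread satisfies `B_ι β_ι = B_{ι+1} (1 + δ'_ι L_ι)`, so each
period contributes `B_{ι+1} δ'_ι L_ι = B_ι (β_ι - 1) + (B_ι - B_{ι+1})`; the last terms
telescope to `B_{α'} - B_{ω'} = 1 - B_{ω'}`. -/

open Finset

theorem mul_eq_mul_spread_sub_one_add_sub {K : Type*} [Field K] {b b' x : K} (hb : b ≠ 0) :
    b' * x = b * (b' / b / (1 / (1 + x)) - 1) + (b - b') := by
  rw [div_div_eq_mul_div, div_one, mul_sub, ← mul_assoc, mul_div_cancel₀ _ hb]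
  ring

theorem floating_leg_value_general
    (α' ω' : ℕ) (hω' : α' < ω')
    (δ' L B : ℕ → ℝ)
    (hB : ∀ ι ∈ Finset.Icc α' ω', 0 < B ι) (hBα' : B α' = 1)
    (Bhat : ℕ → ℝ) (hBhat : ∀ ι, Bhat ι = 1 / (1 + δ' ι * L ι))
    (β : ℕ → ℝ) (hβ : ∀ ι, β ι = (B (ι+1) / B ι) / Bhat ι) :
    ∑ ι ∈ Finset.Ico α' ω', B (ι+1) * δ' ι * L ι
      = 1 - B ω' + ∑ ι ∈ Finset.Ico α' ω', B ι * (β ι - 1) := by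
  have period : ∀ ι ∈ Ico α' ω',
      B (ι+1) * δ' ι * L ι = B ι * (β ι - 1) - (B (ι+1) - B ι) := fun ι hι => by
    have hBι : B ι ≠ 0 := (hB ι (Ico_subset_Icc_self hι)).ne'
    rw [hβ, hBhat, mul_assoc, mul_eq_mul_spread_sub_one_add_sub hBι]
    ring
  rw [sum_congr rfl period, sum_sub_distrib, sum_Ico_sub B hω'.le, hBα']
  ring

/-- Multicurve floating-leg identity:
`Σ B_{ι+1} δ'_ι L_ι = 1 − B_{ω'} + Σ B_ι (β_ι − 1)`. -/
theorem floating_leg_value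
    (α' ω' : ℕ) (hω' : α' < ω')
    (t' : ℕ → ℝ) (ht' : ∀ ι ∈ Finset.Ico α' ω', t' ι < t' (ι+1))
    (δ' L B : ℕ → ℝ)
    (hδ' : ∀ ι ∈ Finset.Ico α' ω', 0 < δ' ι)
    (hB : ∀ ι ∈ Finset.Icc α' ω', 0 < B ι) (hBα' : B α' = 1)
    (Bhat : ℕ → ℝ) (hBhat : ∀ ι, Bhat ι = 1 / (1 + δ' ι * L ι))
    (hBhatpos : ∀ ι ∈ Finset.Ico α' ω', 0 < Bhat ι)
    (β : ℕ → ℝ) (hβ : ∀ ι, β ι = (B (ι+1) / B ι) / Bhat ι) :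
    ∑ ι ∈ Finset.Ico α' ω', B (ι+1) * δ' ι * L ι
      = 1 - B ω' + ∑ ι ∈ Finset.Ico α' ω', B ι * (β ι - 1) :=
  floating_leg_value_general α' ω' hω' δ' L B hB hBα' Bhat hBhat β hβ
end

section
/- In the MHW swaption setting with γ ∈ [0,1), the exponent coefficient (1−γ)·v(t_ω − t_α) = ς_{αω} is strictly the largest among all exponent coefficients appearing in f: (1−γ)·v(t_ω − t_α) > ς_{αj} for every j = α+1,…,ω−1, (1−γ)·v(t_ω − t_α) > ς_{α'ι} for every ι = α'+1,…,ω'−1, and (1−γ)·v(t_ω − t_α) > ν_{α'ι} for every ι = α',…,ω'−1. -/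
noncomputable def mhwVol (a σ τ : ℝ) : ℝ :=
  if a = 0 then σ * τ else σ * (1 - Real.exp (-(a * τ))) / a

lemma mhwVol_lt_mhwVol {a σ x y : ℝ} (ha : 0 ≤ a) (hσ : 0 < σ) (h : x < y) :
    mhwVol a σ x < mhwVol a σ y := by
  unfold mhwVol
  rcases eq_or_lt_of_le ha with h0 | h0
  · rw [if_pos h0.symm, if_pos h0.symm]
    nlinarith
  · rw [if_neg h0.ne', if_neg h0.ne']
    have hexp : Real.exp (-(a * y)) < Real.exp (-(a * x)) := by
      apply Real.exp_lt_exp.mpr; nlinarith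
    rw [div_lt_div_iff₀ h0 h0]
    nlinarith [mul_pos (mul_pos hσ h0) (sub_pos.mpr hexp)]

lemma chain_lt {t : ℕ → ℝ} {a b : ℕ} (ht : ∀ i ∈ Finset.Ico a b, t i < t (i+1)) :
    ∀ i j, a ≤ i → i < j → j ≤ b → t i < t j := by
  intro i j hai hij hjb
  induction j with
  | zero => omega
  | succ k ih =>
    have hk : t k < t (k+1) := ht k (Finset.mem_Ico.mpr ⟨by omega, by omega⟩)
    rcases Nat.lt_or_ge i k with h | h
    · exact lt_trans (ih h (by omega)) hk
    · have : i = k := by omega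
      rw [this]; exact hk

/-- For `γ ∈ [0,1)`, the exponent coefficient `ς_αω = (1−γ) v(t_ω − t_α)` is strictly
the largest among all exponent coefficients appearing in `f`. -/
theorem largest_exponent_coefficient
    (a σ γ ζ : ℝ) (ha : 0 ≤ a) (hσ : 0 < σ) (hγ0 : 0 ≤ γ) (hγ1 : γ < 1) (hζ : 0 < ζ)
    (α ω α' ω' : ℕ) (hω : α + 1 ≤ ω) (hω' : α' + 2 ≤ ω')
    (t t' : ℕ → ℝ)
    (ht : ∀ j ∈ Finset.Ico α ω, t j < t (j+1))
    (ht' : ∀ ι ∈ Finset.Ico α' ω', t' ι < t' (ι+1))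
    (hstart : t' α' = t α) (hend : t' ω' = t ω)
    (c B : ℕ → ℝ) (hc : ∀ j ∈ Finset.Icc (α+1) ω, 0 < c j)
    (hB : ∀ j ∈ Finset.Icc (α+1) ω, 0 < B j)
    (B' β : ℕ → ℝ) (hB' : ∀ ι ∈ Finset.Ico α' ω', 0 < B' ι) (hB'α' : B' α' = 1)
    (hβ : ∀ ι ∈ Finset.Ico α' ω', 1 ≤ β ι)
    (ς ς' ν : ℕ → ℝ)
    (hς : ∀ j, ς j = (1 - γ) * mhwVol a σ (t j - t α))
    (hς' : ∀ ι, ς' ι = (1 - γ) * mhwVol a σ (t' ι - t α))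
    (hν : ∀ ι, ν ι = mhwVol a σ (t' ι - t α) - γ * mhwVol a σ (t' (ι+1) - t α))
    :
    (∀ j ∈ Finset.Ico (α+1) ω, ς j < (1 - γ) * mhwVol a σ (t ω - t α))
    ∧ (∀ ι ∈ Finset.Ico (α'+1) ω', ς' ι < (1 - γ) * mhwVol a σ (t ω - t α))
    ∧ (∀ ι ∈ Finset.Ico α' ω', ν ι < (1 - γ) * mhwVol a σ (t ω - t α)) := by
  have h1γ : (0:ℝ) < 1 - γ := by linarith
  refine ⟨?_, ?_, ?_⟩
  · intro j hj
    rw [Finset.mem_Ico] at hj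
    have htj : t j < t ω := chain_lt ht j ω (by omega) hj.2 le_rfl
    have := mhwVol_lt_mhwVol (x := t j - t α) (y := t ω - t α) ha hσ (by linarith)
    rw [hς j]
    exact mul_lt_mul_of_pos_left this h1γ
  · intro ι hι
    rw [Finset.mem_Ico] at hι
    have htι : t' ι < t ω := by
      have := chain_lt ht' ι ω' (by omega) hι.2 le_rfl
      rwa [hend] at this
    have := mhwVol_lt_mhwVol (x := t' ι - t α) (y := t ω - t α) ha hσ (by linarith)
    rw [hς' ι]
    exact mul_lt_mul_of_pos_left this h1γ
  · intro ι hι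
    rw [Finset.mem_Ico] at hι
    have htι : t' ι < t ω := by
      have := chain_lt ht' ι ω' hι.1 hι.2 le_rfl
      rwa [hend] at this
    have h1 : mhwVol a σ (t' ι - t α) < mhwVol a σ (t ω - t α) :=
      mhwVol_lt_mhwVol ha hσ (by linarith)
    have hsucc : t' ι < t' (ι+1) := ht' ι (Finset.mem_Ico.mpr hι)
    have h2 : mhwVol a σ (t' ι - t α) < mhwVol a σ (t' (ι+1) - t α) :=
      mhwVol_lt_mhwVol ha hσ (by linarith)
    rw [hν ι]
    nlinarith
end

section
/- In the MHW swaption setting with γ ∈ [0,1), the function f tends to +∞ as ξ → −∞. -/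
open Filter Topology Real

lemma mhwVol_zero (a σ : ℝ) : mhwVol a σ 0 = 0 := by
  unfold mhwVol
  split <;> simp

lemma mhwVol_strictMono {a σ : ℝ} (ha : 0 ≤ a) (hσ : 0 < σ) : StrictMono (mhwVol a σ) := by
  intro x y hxy
  unfold mhwVol
  rcases ha.eq_or_lt with rfl | ha
  · simpa using mul_lt_mul_of_pos_left hxy hσ
  · simp only [if_neg ha.ne']
    have : exp (-(a * y)) < exp (-(a * x)) := exp_lt_exp.2 (by nlinarith)
    gcongr

lemma StrictMono.sub_mul_lt_one_sub_mul {f : ℝ → ℝ} (hf : StrictMono f) {γ x y z : ℝ}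
    (hγ : γ ≤ 1) (hxy : x < y) (hyz : y ≤ z) : f x - γ * f y < (1 - γ) * f z := by
  nlinarith [hf hxy, mul_nonneg (sub_nonneg.2 (hf.monotone hyz)) (sub_nonneg.2 hγ)]

lemma strictMonoOn_Icc_of_lt_add_one {β : Type*} [Preorder β] {t : ℕ → β} {m n : ℕ}
    (ht : ∀ j ∈ Finset.Ico m n, t j < t (j + 1)) : StrictMonoOn t (Set.Icc m n) :=
  strictMonoOn_of_lt_succ Set.ordConnected_Icc fun j _ hj hj1 => by
    simp only [Set.mem_Icc, Order.succ_eq_add_one] at hj hj1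
    exact ht j (Finset.mem_Ico.2 ⟨hj.1, hj1.2⟩)

theorem tendsto_mul_exp_sub_sum_mul_exp_atBot {ι : Type*} (S : Finset ι) {A s : ℝ}
    (hA : 0 < A) (hs : 0 < s) (K r : ι → ℝ) (hr : ∀ i ∈ S, r i < s) :
    Tendsto (fun ξ => A * exp (-s * ξ) - ∑ i ∈ S, K i * exp (-r i * ξ)) atBot atTop := by
  have hsum : Tendsto (fun ξ => ∑ i ∈ S, K i * exp ((s - r i) * ξ)) atBot (𝓝 0) := by
    simpa using tendsto_finsetSum S fun i hi =>
      (tendsto_exp_atBot.comp (tendsto_id.const_mul_atBot (sub_pos.2 (hr i hi)))).const_mul (K i)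
  have hexp : Tendsto (fun ξ => exp (-s * ξ)) atBot atTop :=
    tendsto_exp_atTop.comp (tendsto_id.const_mul_atBot_of_neg (neg_neg_of_pos hs))
  have hprod := hexp.atTop_mul_pos hA (by simpa using hsum.const_sub A)
  refine hprod.congr fun ξ => ?_
  rw [mul_sub, mul_comm, Finset.mul_sum]
  congr 1
  refine Finset.sum_congr rfl fun i _ => ?_
  rw [mul_left_comm, ← exp_add]
  ring_nf

lemma exp_neg_mul_sub_sq_mul_sq_div_two (r ξ ζ : ℝ) :
    exp (-r * ξ - r ^ 2 * ζ ^ 2 / 2) = exp (-(r ^ 2 * ζ ^ 2 / 2)) * exp (-r * ξ) := by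
  rw [← exp_add]
  ring_nf

theorem f_tendsto_atTop_atBot_general
    (a σ γ ζ : ℝ) (ha : 0 ≤ a) (hσ : 0 < σ) (hγ1 : γ < 1)
    (α ω α' ω' : ℕ) (hω : α + 1 ≤ ω)
    (t t' : ℕ → ℝ)
    (ht : ∀ j ∈ Finset.Ico α ω, t j < t (j+1))
    (ht' : ∀ ι ∈ Finset.Ico α' ω', t' ι < t' (ι+1))
    (hend : t' ω' = t ω)
    (c B : ℕ → ℝ) (hc : ∀ j ∈ Finset.Icc (α+1) ω, 0 < c j)
    (hB : ∀ j ∈ Finset.Icc (α+1) ω, 0 < B j)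
    (B' β : ℕ → ℝ) (hB' : ∀ ι ∈ Finset.Ico α' ω', 0 < B' ι)
    (ς ς' ν : ℕ → ℝ)
    (hς : ∀ j, ς j = (1 - γ) * mhwVol a σ (t j - t α))
    (hν : ∀ ι, ν ι = mhwVol a σ (t' ι - t α) - γ * mhwVol a σ (t' (ι+1) - t α))
    (f : ℝ → ℝ)
    (hf : ∀ ξ : ℝ, f ξ =
        (∑ j ∈ Finset.Icc (α+1) ω, c j * B j * Real.exp (-(ς j) * ξ - (ς j)^2 * ζ^2 / 2))
      + (∑ ι ∈ Finset.Ico (α'+1) ω', B' ι * Real.exp (-(ς' ι) * ξ - (ς' ι)^2 * ζ^2 / 2))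
      - (∑ ι ∈ Finset.Ico α' ω', β ι * B' ι * Real.exp (-(ν ι) * ξ - (ν ι)^2 * ζ^2 / 2)))
    :
    Filter.Tendsto f Filter.atBot Filter.atTop := by
  have hv := mhwVol_strictMono ha hσ
  have hωmem : ω ∈ Finset.Icc (α + 1) ω := Finset.mem_Icc.2 ⟨hω, le_rfl⟩
  have htαω : t α < t ω :=
    strictMonoOn_Icc_of_lt_add_one ht ⟨le_rfl, by omega⟩ ⟨by omega, le_rfl⟩ (by omega)
  have hs : 0 < ς ω := by
    rw [hς]
    exact mul_pos (sub_pos.2 hγ1) (by simpa [mhwVol_zero] using hv (sub_pos.2 htαω))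
  have hνs : ∀ ι ∈ Finset.Ico α' ω', ν ι < ς ω := fun ι hι => by
    obtain ⟨hlo, hhi⟩ := Finset.mem_Ico.1 hι
    rw [hν, hς, ← hend]
    refine hv.sub_mul_lt_one_sub_mul hγ1.le (by linarith [ht' ι hι]) (sub_le_sub_right ?_ _)
    exact (strictMonoOn_Icc_of_lt_add_one ht').monotoneOn ⟨by omega, hhi⟩ ⟨by omega, le_rfl⟩ hhi
  have hA : 0 < c ω * B ω * exp (-(ς ω ^ 2 * ζ ^ 2 / 2)) := by
    have := hc ω hωmem
    have := hB ω hωmem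
    positivity
  refine tendsto_atTop_mono (fun ξ => ?_) (tendsto_mul_exp_sub_sum_mul_exp_atBot _ hA hs
    (fun ι => β ι * B' ι * exp (-(ν ι ^ 2 * ζ ^ 2 / 2))) ν hνs)
  have hlast_le := Finset.single_le_sum
    (f := fun j => c j * B j * exp (-(ς j) * ξ - (ς j)^2 * ζ^2 / 2))
    (fun j hj => by have := hc j hj; have := hB j hj; positivity) hωmem
  have hmid_nonneg :
      0 ≤ ∑ ι ∈ Finset.Ico (α'+1) ω', B' ι * exp (-(ς' ι) * ξ - (ς' ι)^2 * ζ^2 / 2) :=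
    Finset.sum_nonneg fun ι hι => by
      have := hB' ι (by simp only [Finset.mem_Ico] at hι ⊢; omega)
      positivity
  rw [hf]
  simp only [exp_neg_mul_sub_sq_mul_sq_div_two, mul_assoc] at hlast_le hmid_nonneg ⊢
  linarith

/-- For `γ ∈ [0,1)`, the swaption payoff function `f` tends to `+∞` as `ξ → −∞`. -/
theorem f_tendsto_atTop_atBot
    (a σ γ ζ : ℝ) (ha : 0 ≤ a) (hσ : 0 < σ) (hγ0 : 0 ≤ γ) (hγ1 : γ < 1) (hζ : 0 < ζ)
    (α ω α' ω' : ℕ) (hω : α + 1 ≤ ω) (hω' : α' + 2 ≤ ω')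
    (t t' : ℕ → ℝ)
    (ht : ∀ j ∈ Finset.Ico α ω, t j < t (j+1))
    (ht' : ∀ ι ∈ Finset.Ico α' ω', t' ι < t' (ι+1))
    (hstart : t' α' = t α) (hend : t' ω' = t ω)
    (c B : ℕ → ℝ) (hc : ∀ j ∈ Finset.Icc (α+1) ω, 0 < c j)
    (hB : ∀ j ∈ Finset.Icc (α+1) ω, 0 < B j)
    (B' β : ℕ → ℝ) (hB' : ∀ ι ∈ Finset.Ico α' ω', 0 < B' ι) (hB'α' : B' α' = 1)
    (hβ : ∀ ι ∈ Finset.Ico α' ω', 1 ≤ β ι)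
    (ς ς' ν : ℕ → ℝ)
    (hς : ∀ j, ς j = (1 - γ) * mhwVol a σ (t j - t α))
    (hς' : ∀ ι, ς' ι = (1 - γ) * mhwVol a σ (t' ι - t α))
    (hν : ∀ ι, ν ι = mhwVol a σ (t' ι - t α) - γ * mhwVol a σ (t' (ι+1) - t α))
    (f : ℝ → ℝ)
    (hf : ∀ ξ : ℝ, f ξ =
        (∑ j ∈ Finset.Icc (α+1) ω, c j * B j * Real.exp (-(ς j) * ξ - (ς j)^2 * ζ^2 / 2))
      + (∑ ι ∈ Finset.Ico (α'+1) ω', B' ι * Real.exp (-(ς' ι) * ξ - (ς' ι)^2 * ζ^2 / 2))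
      - (∑ ι ∈ Finset.Ico α' ω', β ι * B' ι * Real.exp (-(ν ι) * ξ - (ν ι)^2 * ζ^2 / 2)))
    :
    Filter.Tendsto f Filter.atBot Filter.atTop :=
  f_tendsto_atTop_atBot_general a σ γ ζ ha hσ hγ1 α ω α' ω' hω t t' ht ht' hend c B hc hB B' β hB' ς
    ς' ν hς hν f hf
end
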